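/- arXiv:1410.3021 — 2 statements merged into one kernel-verified Lean document; each statement's English description precedes it below -/
import Mathlib

section
/- Let H be a hypergraph and let s, C, and r be positive integers. Define the hypergraph T_{H,C,s} with vertex set V(H) and edge set {A ⊆ V(H) : cd_s(H[A]) > (s−1)C}. Then cd_{rs}(H) ≤ r(s−1)C + cd_r(T_{H,C,s}). -/
universe u v

/-- A hypergraph on a vertex type `V`: a collection of subsets of `V`, its edges. -/
structure Hypergraph' (V : Type u) where
  edges : Set (Set V)

namespace Hypergraph'

variable {V : Type u}

/-- The subhypergraph `H[X]` induced by `X ⊆ V`, as a hypergraph on the vertex type `↥X`: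
its edges correspond to the edges of `H` that are contained in `X`. -/
def induce (H : Hypergraph' V) (X : Set V) : Hypergraph' X :=
  ⟨{e : Set X | Subtype.val '' e ∈ H.edges}⟩

/-- A coloring of the vertices is proper if no (nonempty) edge is monochromatic. -/
def IsProper {α : Type v} (H : Hypergraph' V) (c : V → α) : Prop :=
  ∀ e ∈ H.edges, e.Nonempty → ¬ ∃ a, ∀ v ∈ e, c v = a

/-- `H` is `n`-colorable if it admits a proper coloring with `n` colors. -/
def Colorable (H : Hypergraph' V) (n : ℕ) : Prop :=
  ∃ c : V → Fin n, H.IsProper c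

/-- The chromatic number of a hypergraph, valued in `ℕ∞` (`⊤` if no proper coloring exists). -/
noncomputable def chromNum (H : Hypergraph' V) : ℕ∞ :=
  sInf {C : ℕ∞ | ∃ n : ℕ, C = n ∧ H.Colorable n}

/-- The `r`-colorability defect `cd_r(H)`: the minimum number of vertices whose removal
leaves an `r`-colorable induced subhypergraph. -/
noncomputable def cd (H : Hypergraph' V) (r : ℕ) : ℕ∞ :=
  sInf {c : ℕ∞ | ∃ Y : Set V, (H.induce Yᶜ).Colorable r ∧ c = Y.encard}

/-- The Kneser hypergraph `KG^r(H)`: its vertices are the edges of `H`, and its edges are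
the sets of `r` pairwise disjoint edges of `H`. -/
def kneser (H : Hypergraph' V) (r : ℕ) : Hypergraph' H.edges :=
  ⟨{F : Set H.edges | F.encard = r ∧
      F.Pairwise fun e f => Disjoint (e : Set V) (f : Set V)}⟩

end Hypergraph'

/-- The categorical product of a finite family of hypergraphs: a set of vertex tuples is an
edge iff its projection on each coordinate is an edge of the corresponding factor. -/
def hProd {t : ℕ} {W : Fin t → Type u} (H : ∀ i, Hypergraph' (W i)) :
    Hypergraph' (∀ i, W i) :=
  ⟨{e : Set (∀ i, W i) | ∀ i, (fun v => v i) '' e ∈ (H i).edges}⟩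

/-- The categorical product of two hypergraphs. -/
def hProd2 {V : Type u} {V' : Type v} (G : Hypergraph' V) (G' : Hypergraph' V') :
    Hypergraph' (V × V') :=
  ⟨{e : Set (V × V') | Prod.fst '' e ∈ G.edges ∧ Prod.snd '' e ∈ G'.edges}⟩

/-!
Take an optimal `Y` for `cd_r(T)` with a proper `r`-colouring `c` of `T[V ∖ Y]`. No colour class
`A_i` of `c` is an edge of `T`, so deleting some `Z_i ⊆ A_i` with `|Z_i| ≤ (s-1)C` leaves an
`s`-colourable hypergraph. After deleting `Y ∪ ⋃ Z_i`, colour each vertex by the pair (its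
`c`-colour, its colour in `H[A_i ∖ Z_i]`): an edge is either split by `c` or lies inside one
`A_i ∖ Z_i`, so this is a proper `rs`-colouring.
-/

namespace Hypergraph'

variable {V : Type u} {W : Type v}

theorem Colorable.comap {G : Hypergraph' V} {G' : Hypergraph' W} (f : V → W)
    (hf : ∀ e ∈ G.edges, f '' e ∈ G'.edges) {n : ℕ} (h : G'.Colorable n) : G.Colorable n := by
  obtain ⟨c, hc⟩ := h
  refine ⟨c ∘ f, fun e he hne ⟨a, ha⟩ => hc _ (hf e he) (hne.image f) ⟨a, ?_⟩⟩
  rintro _ ⟨v, hv, rfl⟩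
  exact ha v hv

theorem Colorable.of_isEmpty [IsEmpty V] (G : Hypergraph' V) (n : ℕ) : G.Colorable n :=
  ⟨isEmptyElim, fun _ _ ⟨v, _⟩ => isEmptyElim v⟩

theorem Colorable.induce_mono {H : Hypergraph' V} {X X' : Set V} (hX : X ⊆ X') {n : ℕ}
    (h : (H.induce X').Colorable n) : (H.induce X).Colorable n :=
  h.comap (Set.inclusion hX) fun e he => by simpa [induce, Set.image_image] using he

theorem colorable_induce_induce_iff {H : Hypergraph' V} {A : Set V} {Z : Set A} {n : ℕ} :
    ((H.induce A).induce Z).Colorable n ↔ (H.induce (Subtype.val '' Z)).Colorable n := by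
  constructor
  · refine Colorable.comap (fun v => ⟨_, Set.mem_of_mem_image_val v.2⟩) fun e he => ?_
    simpa [induce, Set.image_image] using he
  · refine Colorable.comap (fun z => ⟨z.1.1, Set.mem_image_of_mem _ z.2⟩) fun e he => ?_
    simpa [induce, Set.image_image] using he

theorem colorable_mul_of_colorable_fibers {H : Hypergraph' V} {r s : ℕ} (c : V → Fin r)
    (h : ∀ i, (H.induce (c ⁻¹' {i})).Colorable s) : H.Colorable (r * s) := by
  choose d hd using h
  have hd_fiber : ∀ i (x : ↥(c ⁻¹' {i})), d i x = d (c x) ⟨x, rfl⟩ := by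
    rintro i ⟨x, hx⟩
    obtain rfl : c x = i := hx
    rfl
  refine ⟨fun v => finProdFinEquiv (c v, d (c v) ⟨v, rfl⟩), ?_⟩
  rintro e he ⟨v, hv⟩ ⟨a, ha⟩
  have hsame : ∀ w ∈ e, c w = c v ∧ d (c w) ⟨w, rfl⟩ = d (c v) ⟨v, rfl⟩ := fun w hw =>
    Prod.mk.inj (finProdFinEquiv.injective ((ha w hw).trans (ha v hv).symm))
  refine hd (c v) {x | x.1 ∈ e} ?_ ⟨⟨v, rfl⟩, hv⟩ ⟨d (c v) ⟨v, rfl⟩, fun x hx => ?_⟩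
  · have himage : Subtype.val '' {x : ↥(c ⁻¹' {c v}) | x.1 ∈ e} = e := by
      ext w
      exact ⟨by rintro ⟨x, hx, rfl⟩; exact hx, fun hw => ⟨⟨w, (hsame w hw).1⟩, hw, rfl⟩⟩
    simpa [induce, himage] using he
  · rw [hd_fiber]
    exact (hsame x hx).2

theorem colorable_mul_induce_compl_union {H : Hypergraph' V} {Y : Set V} {r s : ℕ}
    (c : ↥Yᶜ → Fin r) (Z : ∀ i, Set ↥(Subtype.val '' (c ⁻¹' {i})))
    (hZ : ∀ i, ((H.induce (Subtype.val '' (c ⁻¹' {i}))).induce (Z i)ᶜ).Colorable s) :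
    (H.induce (Y ∪ ⋃ i, Subtype.val '' Z i)ᶜ).Colorable (r * s) := by
  have hY : (Y ∪ ⋃ i, Subtype.val '' Z i)ᶜ ⊆ Yᶜ := Set.compl_subset_compl.2 Set.subset_union_left
  refine colorable_mul_of_colorable_fibers (fun v => c (Set.inclusion hY v)) fun i => ?_
  refine colorable_induce_induce_iff.2 ((colorable_induce_induce_iff.1 (hZ i)).induce_mono ?_)
  rintro _ ⟨v, hv, rfl⟩
  have hvA : v.1 ∈ Subtype.val '' (c ⁻¹' {i}) := ⟨Set.inclusion hY v, hv, rfl⟩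
  refine ⟨⟨v.1, hvA⟩, fun hvZ => v.2 (Or.inr ?_), rfl⟩
  exact Set.mem_iUnion.2 ⟨i, _, hvZ, rfl⟩

theorem cd_le_encard {H : Hypergraph' V} {n : ℕ} {Y : Set V} (h : (H.induce Yᶜ).Colorable n) :
    H.cd n ≤ Y.encard :=
  sInf_le ⟨Y, h, rfl⟩

/-- Removing every vertex always leaves a colorable hypergraph, so the infimum defining `cd`
is over a nonempty set of `ℕ∞` and is attained. -/
theorem exists_colorable_encard_eq_cd (H : Hypergraph' V) (n : ℕ) :
    ∃ Y : Set V, (H.induce Yᶜ).Colorable n ∧ Y.encard = H.cd n := by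
  have : IsEmpty ↥(Set.univ : Set V)ᶜ := ⟨fun v => v.2 trivial⟩
  obtain ⟨Y, hY, hcd⟩ :=
    csInf_mem (⟨_, Set.univ, Colorable.of_isEmpty _ n, rfl⟩ :
      {c : ℕ∞ | ∃ Y : Set V, (H.induce Yᶜ).Colorable n ∧ c = Y.encard}.Nonempty)
  exact ⟨Y, hY, hcd.symm⟩

theorem nonempty_of_cd_pos {H : Hypergraph' V} {n : ℕ} (h : 0 < H.cd n) : Nonempty V := by
  by_contra hV
  rw [not_nonempty_iff] at hV
  have := cd_le_encard (Colorable.of_isEmpty (H.induce (∅ : Set V)ᶜ) n)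
  rw [Set.encard_empty] at this
  exact h.ne' (nonpos_iff_eq_zero.1 this)

end Hypergraph'

theorem cd_mul_le_of_auxiliary_general {V : Type u} (H : Hypergraph' V) (s C r : ℕ) :
    H.cd (r * s) ≤ ((r * (s - 1) * C : ℕ) : ℕ∞) +
      (Hypergraph'.mk {A : Set V | (((s - 1) * C : ℕ) : ℕ∞) < (H.induce A).cd s}).cd r := by
  set T : Hypergraph' V := ⟨{A : Set V | (((s - 1) * C : ℕ) : ℕ∞) < (H.induce A).cd s}⟩
  obtain ⟨Y, ⟨c, hc⟩, hY⟩ := Hypergraph'.exists_colorable_encard_eq_cd T r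
  have hsmall : ∀ i, (H.induce (Subtype.val '' (c ⁻¹' {i}))).cd s ≤ ((s - 1) * C : ℕ) := by
    intro i
    by_contra! hbig
    -- otherwise the colour class `c ⁻¹' {i}` is a monochromatic edge of `T[V ∖ Y]`
    obtain ⟨⟨_, v, hv, rfl⟩⟩ := Hypergraph'.nonempty_of_cd_pos (zero_le.trans_lt hbig)
    exact hc (c ⁻¹' {i}) hbig ⟨v, hv⟩ ⟨i, fun _ => id⟩
  choose Z hZ hZcard using fun i =>
    Hypergraph'.exists_colorable_encard_eq_cd (H.induce (Subtype.val '' (c ⁻¹' {i}))) s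
  calc H.cd (r * s) ≤ (Y ∪ ⋃ i, Subtype.val '' Z i).encard :=
        Hypergraph'.cd_le_encard (Hypergraph'.colorable_mul_induce_compl_union c Z hZ)
    _ ≤ Y.encard + ∑ i, (Subtype.val '' Z i).encard :=
      (Set.encard_union_le _ _).trans (by gcongr; exact Set.encard_iUnion_le_of_fintype _)
    _ ≤ Y.encard + ∑ _i : Fin r, (((s - 1) * C : ℕ) : ℕ∞) := by
      gcongr with i
      rw [Subtype.val_injective.encard_image, hZcard i]
      exact hsmall i
    _ = ((r * (s - 1) * C : ℕ) : ℕ∞) + T.cd r := by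
      rw [hY, add_comm]
      simp [mul_assoc]

/-- **Lemma.** For a hypergraph `H` and positive integers `s, C, r`, let `T_{H,C,s}` be the
hypergraph with vertex set `V(H)` and edges `{A ⊆ V(H) : cd_s(H[A]) > (s−1)C}`. Then
`cd_{rs}(H) ≤ r(s−1)C + cd_r(T_{H,C,s})`. -/
theorem cd_mul_le_of_auxiliary {V : Type u} (H : Hypergraph' V) (s C r : ℕ)
    (hs : 0 < s) (hC : 0 < C) (hr : 0 < r) :
    H.cd (r * s) ≤ ((r * (s - 1) * C : ℕ) : ℕ∞) +
      (Hypergraph'.mk {A : Set V | (((s - 1) * C : ℕ) : ℕ∞) < (H.induce A).cd s}).cd r :=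
  cd_mul_le_of_auxiliary_general H s C r
end

section
/- For every hypergraph H with finitely many vertices and every integer r ≥ 2, one has |V(H)| − alt_r(H) ≥ cd_r(H). -/
universe u v

/-- The maximum length of an alternating subsequence of the nonzero entries of `x`, where
`x ∈ (Z_r ∪ {0})^n` is encoded with `none` for `0` and `ZMod r` for the `r`-th roots of
unity (`j ∈ ZMod r` corresponding to `ω^j`). -/
noncomputable def altSeq {r n : ℕ} (x : Fin n → Option (ZMod r)) : ℕ :=
  sSup {k : ℕ | ∃ f : Fin k → Fin n, StrictMono f ∧ (∀ j, x (f j) ≠ none) ∧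
    ∀ (j : ℕ) (h : j + 1 < k), x (f ⟨j, Nat.lt_of_succ_lt h⟩) ≠ x (f ⟨j + 1, h⟩)}

/-- The `r`-alternation number `alt_r(H)` of a hypergraph: the minimum, over identifications
`π` of `Fin n` with the vertex set (`n = |V(H)|`), of the maximum of `altSeq x` over all
vectors `x ∈ (Z_r ∪ {0})^n` none of whose supports `supp_j(x)` contains an edge of `H`. -/
noncomputable def altNum {V : Type u} (r : ℕ) (H : Hypergraph' V) : ℕ :=
  ⨅ π : Fin (Nat.card V) ≃ V,
    sSup {a : ℕ | ∃ x : Fin (Nat.card V) → Option (ZMod r),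
      (∀ j : ZMod r, ∀ E ∈ H.edges, ¬ E ⊆ (fun i => π i) '' {i | x i = some j}) ∧
      a = altSeq x}

/-! Fix an ordering `π` realising `alt_r(H)` and an admissible `x` realising the maximum.
Colouring each vertex `π i` with `x i ≠ 0` by `x i` is proper on the vertices it colours: a
monochromatic edge of colour `j` would lie in `supp_j(x)`. Every other vertex is deleted, and
there are at most `n - alt_π(x)` of them because an alternating subsequence uses only nonzero
entries. -/

namespace Hypergraph'

variable {V : Type u} {H : Hypergraph' V} {r : ℕ}

theorem colorable_of_isProper {α : Type v} [Fintype α] {c : V → α} (hc : H.IsProper c)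
    (hα : Fintype.card α ≤ r) : H.Colorable r := by
  refine ⟨fun v => Fin.castLE hα (Fintype.equivFin α (c v)), fun e he hne ⟨a, ha⟩ => ?_⟩
  obtain ⟨v₀, hv₀⟩ := hne
  refine hc e he ⟨v₀, hv₀⟩ ⟨c v₀, fun v hv => ?_⟩
  have := (ha v hv).trans (ha v₀ hv₀).symm
  exact (Fintype.equivFin α).injective (Fin.castLE_injective hα this)

theorem isProper_induce {α : Type v} {X : Set V} (c : V → α)
    (hc : ∀ a, ∀ E ∈ H.edges, ¬ E ⊆ X ∩ c ⁻¹' {a}) :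
    (H.induce X).IsProper fun v => c v := by
  rintro e he - ⟨a, ha⟩
  refine hc a _ he ?_
  rintro _ ⟨v, hv, rfl⟩
  exact ⟨v.2, ha v hv⟩

theorem colorable_induce_empty : (H.induce ∅).Colorable r :=
  ⟨isEmptyElim, fun _ _ ⟨v, _⟩ => isEmptyElim v⟩

theorem cd_le_card_sub_ncard [Finite V] {X : Set V} (h : (H.induce X).Colorable r) :
    H.cd r ≤ (Nat.card V - X.ncard : ℕ) := by
  refine sInf_le ⟨Xᶜ, by rwa [compl_compl], ?_⟩
  rw [← Set.ncard_compl, (Set.toFinite _).cast_ncard_eq]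

end Hypergraph'

section Alternation

variable {r n : ℕ}

theorem altSeq_le_ncard (x : Fin n → Option (ZMod r)) :
    altSeq x ≤ {i | x i ≠ none}.ncard := by
  refine csSup_le' fun k ⟨f, hf, hnone, _⟩ => ?_
  calc k = (Set.range f).ncard := by rw [Set.ncard_range_of_injective hf.injective, Nat.card_fin]
    _ ≤ _ := Set.ncard_le_ncard (Set.range_subset_iff.2 hnone)

theorem altSeq_le_length (x : Fin n → Option (ZMod r)) : altSeq x ≤ n :=
  (altSeq_le_ncard x).trans <| (Set.ncard_le_card _).trans_eq (Nat.card_fin n)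

variable {V : Type u} {H : Hypergraph' V}

theorem colorable_induce_image_support [NeZero r] (π : Fin n ≃ V) {x : Fin n → Option (ZMod r)}
    (hx : ∀ j : ZMod r, ∀ E ∈ H.edges, ¬ E ⊆ (fun i => π i) '' {i | x i = some j}) :
    (H.induce (π '' {i | x i ≠ none})).Colorable r := by
  refine Hypergraph'.colorable_of_isProper
    (Hypergraph'.isProper_induce (fun v => (x (π.symm v)).getD 0) fun a E hE hsub => ?_)
    (ZMod.card r).le
  refine hx a E hE fun v hv => ?_
  obtain ⟨⟨i, hi, rfl⟩, hcol⟩ := hsub hv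
  obtain ⟨b, hb⟩ := Option.ne_none_iff_exists'.1 hi
  rw [Set.mem_preimage, π.symm_apply_apply, hb, Option.getD_some, Set.mem_singleton_iff] at hcol
  exact ⟨i, hb.trans (congrArg some hcol), rfl⟩

def altValues (H : Hypergraph' V) (r : ℕ) (π : Fin n ≃ V) : Set ℕ :=
  {a | ∃ x : Fin n → Option (ZMod r),
    (∀ j : ZMod r, ∀ E ∈ H.edges, ¬ E ⊆ (fun i => π i) '' {i | x i = some j}) ∧
      a = altSeq x}

theorem altNum_eq_iInf (H : Hypergraph' V) (r : ℕ) :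
    altNum r H = ⨅ π : Fin (Nat.card V) ≃ V, sSup (altValues H r π) :=
  rfl

theorem bddAbove_altValues (H : Hypergraph' V) (r : ℕ) (π : Fin n ≃ V) :
    BddAbove (altValues H r π) :=
  ⟨n, by rintro _ ⟨x, -, rfl⟩; exact altSeq_le_length x⟩

end Alternation

/-- For every hypergraph `H` with finitely many vertices and every `r ≥ 2`,
`|V(H)| − alt_r(H) ≥ cd_r(H)`. -/
theorem cd_le_card_sub_altNum {V : Type u} [Finite V] (H : Hypergraph' V) (r : ℕ)
    (hr : 2 ≤ r) :
    H.cd r ≤ ((Nat.card V - altNum r H : ℕ) : ℕ∞) := by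
  have : NeZero r := ⟨by omega⟩
  have : Nonempty (Fin (Nat.card V) ≃ V) := ⟨(Finite.equivFin V).symm⟩
  obtain ⟨π, hπ : sSup (altValues H r π) = _⟩ :=
    ciInf_mem fun π : Fin (Nat.card V) ≃ V => sSup (altValues H r π)
  rw [altNum_eq_iInf, ← hπ]
  rcases (altValues H r π).eq_empty_or_nonempty with hS | hS
  · -- happens when `∅` is an edge of `H`
    simpa [hS] using H.cd_le_card_sub_ncard (Hypergraph'.colorable_induce_empty (r := r))
  obtain ⟨x, hx, hxa⟩ := Nat.sSup_mem hS (bddAbove_altValues H r π)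
  calc H.cd r ≤ (Nat.card V - (π '' {i | x i ≠ none}).ncard : ℕ) :=
        Hypergraph'.cd_le_card_sub_ncard (colorable_induce_image_support π hx)
    _ ≤ (Nat.card V - sSup (altValues H r π) : ℕ) := by
        rw [Set.ncard_image_of_injective _ π.injective, hxa]
        gcongr
        exact altSeq_le_ncard x
end
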